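/- For any graph G and integer k ≥ 1, the minimum size of a vertex cover of G_k equals k times the minimum size of a vertex cover of G, provided G has a perfect matching between a minimum vertex cover and its complement. More precisely: if G is very well-covered with 2h vertices, then the minimum vertex cover size of G_k equals kh. -/

import Mathlib

/-- The graph `G_k`. -/
def graphPower {V : Type*} (G : SimpleGraph V) (k : ℕ) : SimpleGraph (V × Fin k) where
  Adj a b := G.Adj a.1 b.1 ∧ a.2.val + b.2.val + 2 ≤ k + 1
  symm := ⟨by rintro a b ⟨h1, h2⟩; exact ⟨h1.symm, by omega⟩⟩
  loopless := ⟨by rintro a ⟨h1, _⟩; exact G.ne_of_adj h1 rfl⟩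

/-- `C` is a vertex cover of `G`. -/
def IsVC {V : Type*} (G : SimpleGraph V) (C : Set V) : Prop :=
  ∀ ⦃u v : V⦄, G.Adj u v → u ∈ C ∨ v ∈ C

/-- `A` is an independent set of `G`. -/
def IsIndep {V : Type*} (G : SimpleGraph V) (A : Set V) : Prop :=
  ∀ u ∈ A, ∀ v ∈ A, ¬ G.Adj u v

/-- `A` is a maximal independent set of `G`. -/
def IsMaxIndep {V : Type*} (G : SimpleGraph V) (A : Set V) : Prop :=
  IsIndep G A ∧ ∀ B : Set V, IsIndep G B → A ⊆ B → B = A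

/-!
A maximal independent set `A` has `h` elements, hence so does its complement, and the vertices
`(v, p)` with `v ∉ A` cover `G_k`. For the lower bound, a very well-covered graph satisfies
Hall's condition `|S| ≤ |N(S)|` for independent `S`, so `A` is matched into `Aᶜ` along edges by
some injective `f`. Since `(a, p)` and `(f a, k + 1 - p)` are adjacent in `G_k`, a vertex cover
contains one of them, which gives an injection of `A × [k]` into any vertex cover.

Hall's condition is proved by induction on `|S|`. Take a maximal independent `M` meeting `N(S)`.
The set `S ∪ (M \ N[S])` is independent, so comparing it with `M` gives
`|S| ≤ |S ∩ M| + |N(S) ∩ M|`; and `S ∩ M` lies in the strictly smaller set `S \ N(M)`, whose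
neighbourhood lies in `N(S) \ M`.
-/

open Function

def nbhd {V : Type*} (G : SimpleGraph V) (S : Set V) : Set V := {v | ∃ s ∈ S, G.Adj s v}

section IndependentSets

variable {V : Type*} {G : SimpleGraph V}

lemma IsIndep.mono {A B : Set V} (hB : IsIndep G B) (hAB : A ⊆ B) : IsIndep G A :=
  fun u hu v hv => hB u (hAB hu) v (hAB hv)

lemma isIndep_singleton (v : V) : IsIndep G {v} := by
  rintro u rfl w rfl
  exact G.irrefl

lemma isMaxIndep_iff_maximal {A : Set V} : IsMaxIndep G A ↔ Maximal (IsIndep G) A :=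
  ⟨fun hA => ⟨hA.1, fun B hB hAB => (hA.2 B hB hAB).le⟩,
    fun hA => ⟨hA.1, fun _ hB hAB => (hA.2 hB hAB).antisymm hAB⟩⟩

lemma exists_isMaxIndep_superset [Finite V] {I : Set V} (hI : IsIndep G I) :
    ∃ M, IsMaxIndep G M ∧ I ⊆ M := by
  obtain ⟨M, hIM, hM⟩ := Finite.exists_le_maximal hI
  exact ⟨M, isMaxIndep_iff_maximal.2 hM, hIM⟩

lemma ncard_le_of_isIndep [Finite V] {h : ℕ} (hwc : ∀ A : Set V, IsMaxIndep G A → A.ncard = h)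
    {I : Set V} (hI : IsIndep G I) : I.ncard ≤ h := by
  obtain ⟨M, hM, hIM⟩ := exists_isMaxIndep_superset hI
  exact hwc M hM ▸ Set.ncard_le_ncard hIM

lemma ncard_le_ncard_inter_add_ncard_nbhd_inter [Finite V] {h : ℕ}
    (hwc : ∀ A : Set V, IsMaxIndep G A → A.ncard = h) {S M : Set V}
    (hS : IsIndep G S) (hM : IsMaxIndep G M) :
    S.ncard ≤ (S ∩ M).ncard + (nbhd G S ∩ M).ncard := by
  set X := M \ (S ∪ nbhd G S)
  have hSX : IsIndep G (S ∪ X) := by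
    have hX : ∀ s ∈ S, ∀ x ∈ X, ¬ G.Adj s x := fun s hs x hx hsx => hx.2 (.inr ⟨s, hs, hsx⟩)
    rintro u (hu | hu) v (hv | hv)
    · exact hS u hu v hv
    · exact hX u hu v hv
    · exact fun huv => hX v hv u hu huv.symm
    · exact hM.1 u hu.1 v hv.1
  have hdisj : Disjoint S X := Set.disjoint_left.2 fun s hs hX => hX.2 (.inl hs)
  have hcover : M ⊆ (S ∩ M) ∪ (nbhd G S ∩ M) ∪ X := by
    intro m hm
    by_cases hmS : m ∈ S ∪ nbhd G S
    · rcases hmS with hmS | hmS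
      exacts [.inl (.inl ⟨hmS, hm⟩), .inl (.inr ⟨hmS, hm⟩)]
    · exact .inr ⟨hm, hmS⟩
  have hSXh := ncard_le_of_isIndep hwc hSX
  rw [Set.ncard_union_eq hdisj] at hSXh
  have hMh : h ≤ (S ∩ M).ncard + (nbhd G S ∩ M).ncard + X.ncard :=
    hwc M hM ▸ (Set.ncard_le_ncard hcover).trans
      ((Set.ncard_union_le _ _).trans (Nat.add_le_add_right (Set.ncard_union_le _ _) _))
  omega

theorem ncard_le_ncard_nbhd [Finite V] {h : ℕ} (hiso : ∀ v : V, ∃ u, G.Adj v u)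
    (hwc : ∀ A : Set V, IsMaxIndep G A → A.ncard = h) {S : Set V} (hS : IsIndep G S) :
    S.ncard ≤ (nbhd G S).ncard := by
  rcases S.eq_empty_or_nonempty with rfl | ⟨s, hs⟩
  · simp
  obtain ⟨u, hsu⟩ := hiso s
  obtain ⟨M, hM, huM⟩ := exists_isMaxIndep_superset (isIndep_singleton (G := G) u)
  set T := S \ nbhd G M
  have hTS : T.ncard < S.ncard :=
    Set.ncard_lt_ncard (Set.sdiff_ssubset_left_iff.2 ⟨s, hs, u, huM rfl, hsu.symm⟩)
  have hT := ncard_le_ncard_nbhd hiso hwc (hS.mono (A := T) Set.sdiff_subset)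
  have hSMT : S ∩ M ⊆ T := fun v hv =>
    ⟨hv.1, fun ⟨m, hm, hmv⟩ => hM.1 m hm v hv.2 hmv⟩
  have hNT : nbhd G T ⊆ nbhd G S \ M := fun v ⟨t, ht, htv⟩ =>
    ⟨⟨t, ht.1, htv⟩, fun hvM => ht.2 ⟨v, hvM, htv.symm⟩⟩
  calc S.ncard ≤ (S ∩ M).ncard + (nbhd G S ∩ M).ncard :=
        ncard_le_ncard_inter_add_ncard_nbhd_inter hwc hS hM
    _ ≤ (nbhd G S \ M).ncard + (nbhd G S ∩ M).ncard :=
        Nat.add_le_add_right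
          (((Set.ncard_le_ncard hSMT).trans hT).trans (Set.ncard_le_ncard hNT)) _
    _ = (nbhd G S).ncard := by
        rw [add_comm, Set.ncard_inter_add_ncard_sdiff_eq_ncard]
termination_by S.ncard

lemma exists_injective_adj_compl [Finite V] {A : Set V} (hA : IsIndep G A)
    (hhall : ∀ S ⊆ A, S.ncard ≤ (nbhd G S).ncard) :
    ∃ f : A → ↥Aᶜ, Injective f ∧ ∀ a : A, G.Adj a (f a) := by
  classical
  have := Fintype.ofFinite V
  obtain ⟨f, hf, hfN⟩ := (Finset.all_card_le_biUnion_card_iff_exists_injective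
      fun a : A => G.neighborFinset a).1 fun s => by
    have hs := hhall (s.image Subtype.val) (by simp)
    have hN : nbhd G (s.image Subtype.val) = s.biUnion fun a => G.neighborFinset a := by
      ext; simp [nbhd]
    rwa [hN, Set.ncard_coe_finset, Set.ncard_coe_finset,
      Finset.card_image_of_injective _ Subtype.val_injective] at hs
  have hadj (a : A) : G.Adj a (f a) := (G.mem_neighborFinset _ _).1 (hfN a)
  exact ⟨fun a => ⟨f a, fun hfa => hA a a.2 (f a) hfa (hadj a)⟩,
    fun a b hab => hf (congrArg Subtype.val hab), hadj⟩

end IndependentSets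

section GraphPower

variable {V : Type*} {G : SimpleGraph V} {k : ℕ}

lemma graphPower_adj_rev {u v : V} (huv : G.Adj u v) (p : Fin k) :
    (graphPower G k).Adj (u, p) (v, p.rev) :=
  ⟨huv, by simp only [Fin.val_rev]; omega⟩

lemma isVC_graphPower_compl_prod {A : Set V} (hA : IsIndep G A) :
    IsVC (graphPower G k) (Aᶜ ×ˢ Set.univ) := by
  intro x y hxy
  by_contra! hcov
  simp only [Set.mem_prod, Set.mem_compl_iff, Set.mem_univ, and_true, not_not] at hcov
  exact hA x.1 hcov.1 y.1 hcov.2 hxy.1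

lemma mul_ncard_le_ncard_of_isVC_graphPower [Finite V] {A : Set V} (f : A → ↥Aᶜ)
    (hf : Injective f) (hadj : ∀ a : A, G.Adj a (f a)) {C : Set (V × Fin k)}
    (hC : IsVC (graphPower G k) C) : k * A.ncard ≤ C.ncard := by
  classical
  let F : A × Fin k → C := fun x =>
    if hx : (x.1.1, x.2) ∈ C then ⟨_, hx⟩
    else ⟨((f x.1 : V), x.2.rev), (hC (graphPower_adj_rev (hadj x.1) x.2)).resolve_left hx⟩
  have hF : Injective F := by
    rintro ⟨a, p⟩ ⟨b, q⟩ hab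
    simp only [F] at hab
    split_ifs at hab <;> simp only [Subtype.mk.injEq, Prod.mk.injEq] at hab
    · exact Prod.ext (Subtype.ext hab.1) hab.2
    · exact absurd (hab.1 ▸ a.2) (f b).2
    · exact absurd (hab.1 ▸ b.2) (f a).2
    · exact Prod.ext (hf (Subtype.ext hab.1)) (Fin.rev_injective hab.2)
  have := Nat.card_le_card_of_injective F hF
  rwa [Nat.card_prod, Nat.card_coe_set_eq, Nat.card_coe_set_eq, Nat.card_fin, mul_comm] at this

end GraphPower

theorem stmt7_general {V : Type*} [Fintype V] (G : SimpleGraph V) (h : ℕ)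
    (hcard : Fintype.card V = 2 * h)
    (hiso : ∀ v : V, ∃ u, G.Adj v u)
    (hwc : ∀ A : Set V, IsMaxIndep G A → A.ncard = h)
    (k : ℕ) :
    sInf {c : ℕ | ∃ C : Set (V × Fin k), IsVC (graphPower G k) C ∧ C.ncard = c}
      = k * h := by
  obtain ⟨A, hA, -⟩ := exists_isMaxIndep_superset (G := G) (I := ∅) (fun _ hv => hv.elim)
  have hAc : Aᶜ.ncard = h := by
    have := Set.ncard_add_ncard_compl A
    rw [hwc A hA, Nat.card_eq_fintype_card, hcard] at this
    omega
  obtain ⟨f, hf, hadj⟩ := exists_injective_adj_compl hA.1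
    fun S hS => ncard_le_ncard_nbhd hiso hwc (hA.1.mono hS)
  have hcover := isVC_graphPower_compl_prod (k := k) hA.1
  refine le_antisymm (Nat.sInf_le ⟨_, hcover, ?_⟩) (le_csInf ⟨_, _, hcover, rfl⟩ ?_)
  · rw [Set.ncard_prod, Set.ncard_univ, Nat.card_fin, hAc, mul_comm]
  · rintro _ ⟨C, hC, rfl⟩
    exact hwc A hA ▸ mul_ncard_le_ncard_of_isVC_graphPower f hf hadj hC

/-- If `G` is a very well-covered graph with `2h` vertices (no isolated vertices,
every maximal independent set of size `h`), then the minimum size of a vertex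
cover of `G_k` is `k*h`. -/
theorem stmt7 {V : Type*} [Fintype V] (G : SimpleGraph V) (h : ℕ)
    (hcard : Fintype.card V = 2 * h)
    (hiso : ∀ v : V, ∃ u, G.Adj v u)
    (hwc : ∀ A : Set V, IsMaxIndep G A → A.ncard = h)
    (k : ℕ) (hk : 1 ≤ k) :
    sInf {c : ℕ | ∃ C : Set (V × Fin k), IsVC (graphPower G k) C ∧ C.ncard = c}
      = k * h :=
  stmt7_general G h hcard hiso hwc k
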